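/- arXiv:2603.09864 — 4 statements merged into one kernel-verified Lean document; each statement's English description precedes it below -/
import Mathlib

section
/- Let K ⊆ ℝ^d be a closed convex cone and let E ⊆ {1,…,d}. Then the dual cone of proj_{ℝ^E}(K) equals the closure of supp_E(K*); in particular, supp_E(K*) ⊆ (proj_{ℝ^E}(K))* and (proj_{ℝ^E}(K))* ⊆ closure(supp_E(K*)). -/
/-!
Extending a functional `c` on `ℝ^E` by zero outside `E` gives `cbar` with
`⟨cbar, x⟩ = ⟨c, proj_E x⟩`, so `c` is nonnegative on `proj_E(K)` exactly when `cbar ∈ K*`.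
Hence `supp_E(K*)` is already the dual cone of `proj_E(K)`, and it is closed,
being an intersection of closed half-spaces.
-/

open Finset

section DualOfProjection

variable {ι : Type*} [Fintype ι]

theorem sum_mul_eq_sum_subtype_of_eq_zero (E : Finset ι) {c : ι → ℝ} (x : ι → ℝ)
    (hc : ∀ i ∉ E, c i = 0) : ∑ i, c i * x i = ∑ i : E, c i * x i := by
  rw [sum_coe_sort E fun i => c i * x i]
  exact (Fintype.sum_subset fun i hi => by_contra fun hiE => hi (by rw [hc i hiE, zero_mul])).symm

theorem isClosed_setOf_forall_sum_mul_nonneg {κ : Type*} [Fintype κ] (Z : Set (κ → ℝ)) :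
    IsClosed {c : κ → ℝ | ∀ z ∈ Z, 0 ≤ ∑ i, c i * z i} := by
  simp only [Set.ofPred_forall]
  exact isClosed_biInter fun z _ => isClosed_le continuous_const <|
    continuous_finsetSum _ fun i _ => (continuous_apply i).mul continuous_const

theorem setOf_exists_extension_subset_dual_proj (K : Set (ι → ℝ)) (E : Finset ι) :
    {c : E → ℝ | ∃ cbar : ι → ℝ, (∀ x ∈ K, 0 ≤ ∑ i, cbar i * x i) ∧
        (∀ i ∉ E, cbar i = 0) ∧ (∀ i : E, cbar i = c i)} ⊆
      {c : E → ℝ | ∀ z ∈ {z : E → ℝ | ∃ x ∈ K, ∀ i : E, x i = z i},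
        0 ≤ ∑ i : E, c i * z i} := by
  rintro c ⟨cbar, hdual, hzero, hext⟩ z ⟨x, hx, hxz⟩
  calc 0 ≤ ∑ i, cbar i * x i := hdual x hx
    _ = ∑ i : E, cbar i * x i := sum_mul_eq_sum_subtype_of_eq_zero E x hzero
    _ = ∑ i : E, c i * z i := sum_congr rfl fun i _ => by rw [hext i, hxz i]

theorem dual_proj_subset_setOf_exists_extension [DecidableEq ι] (K : Set (ι → ℝ)) (E : Finset ι) :
    {c : E → ℝ | ∀ z ∈ {z : E → ℝ | ∃ x ∈ K, ∀ i : E, x i = z i},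
        0 ≤ ∑ i : E, c i * z i} ⊆
      {c : E → ℝ | ∃ cbar : ι → ℝ, (∀ x ∈ K, 0 ≤ ∑ i, cbar i * x i) ∧
        (∀ i ∉ E, cbar i = 0) ∧ (∀ i : E, cbar i = c i)} := by
  intro c hc
  have hzero : ∀ i ∉ E, (fun i => if h : i ∈ E then c ⟨i, h⟩ else 0) i = 0 :=
    fun i hi => dif_neg hi
  refine ⟨fun i => if h : i ∈ E then c ⟨i, h⟩ else 0, fun x hx => ?_, hzero,
    fun i => dif_pos i.2⟩
  rw [sum_mul_eq_sum_subtype_of_eq_zero E x hzero]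
  convert hc (fun i => x i) ⟨x, hx, fun i => rfl⟩ using 2 with i
  rw [dif_pos i.2]

end DualOfProjection

theorem stmt_2_general (d : ℕ) (K : Set (Fin d → ℝ))
    (E : Finset (Fin d)) :
    ({c : E → ℝ | ∀ z ∈ {z : E → ℝ | ∃ x ∈ K, ∀ i : E, x i = z i},
        0 ≤ ∑ i : E, c i * z i} =
      closure {c : E → ℝ | ∃ cbar : Fin d → ℝ,
        (∀ x ∈ K, 0 ≤ ∑ i, cbar i * x i) ∧
        (∀ i ∉ E, cbar i = 0) ∧ (∀ i : E, cbar i = c i)}) ∧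
    ({c : E → ℝ | ∃ cbar : Fin d → ℝ,
        (∀ x ∈ K, 0 ≤ ∑ i, cbar i * x i) ∧
        (∀ i ∉ E, cbar i = 0) ∧ (∀ i : E, cbar i = c i)} ⊆
      {c : E → ℝ | ∀ z ∈ {z : E → ℝ | ∃ x ∈ K, ∀ i : E, x i = z i},
        0 ≤ ∑ i : E, c i * z i}) ∧
    ({c : E → ℝ | ∀ z ∈ {z : E → ℝ | ∃ x ∈ K, ∀ i : E, x i = z i},
        0 ≤ ∑ i : E, c i * z i} ⊆
      closure {c : E → ℝ | ∃ cbar : Fin d → ℝ,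
        (∀ x ∈ K, 0 ≤ ∑ i, cbar i * x i) ∧
        (∀ i ∉ E, cbar i = 0) ∧ (∀ i : E, cbar i = c i)}) := by
  have hsupp_sub := setOf_exists_extension_subset_dual_proj K E
  have hsupp_eq := (dual_proj_subset_setOf_exists_extension K E).antisymm hsupp_sub
  have hclosure := (isClosed_setOf_forall_sum_mul_nonneg
    {z : E → ℝ | ∃ x ∈ K, ∀ i : E, x i = z i}).closure_eq
  rw [← hsupp_eq]
  exact ⟨hclosure.symm, subset_rfl, hclosure.ge⟩

/-- Let `K ⊆ ℝ^d` be a (nonempty) closed convex cone and `E ⊆ {1,…,d}`.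
Then the dual cone of `proj_{ℝ^E}(K)` equals the closure of
`supp_E(K*) = proj_{ℝ^E}(K* ∩ H_E)`; in particular
`supp_E(K*) ⊆ (proj_{ℝ^E}(K))*` and `(proj_{ℝ^E}(K))* ⊆ closure (supp_E(K*))`. -/
theorem stmt_2 (d : ℕ) (K : Set (Fin d → ℝ))
    (hKcl : IsClosed K) (hKconv : Convex ℝ K)
    (hKcone : ∀ x ∈ K, ∀ t : ℝ, 0 ≤ t → t • x ∈ K)
    (hKne : K.Nonempty)
    (E : Finset (Fin d)) :
    ({c : E → ℝ | ∀ z ∈ {z : E → ℝ | ∃ x ∈ K, ∀ i : E, x i = z i},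
        0 ≤ ∑ i : E, c i * z i} =
      closure {c : E → ℝ | ∃ cbar : Fin d → ℝ,
        (∀ x ∈ K, 0 ≤ ∑ i, cbar i * x i) ∧
        (∀ i ∉ E, cbar i = 0) ∧ (∀ i : E, cbar i = c i)}) ∧
    ({c : E → ℝ | ∃ cbar : Fin d → ℝ,
        (∀ x ∈ K, 0 ≤ ∑ i, cbar i * x i) ∧
        (∀ i ∉ E, cbar i = 0) ∧ (∀ i : E, cbar i = c i)} ⊆
      {c : E → ℝ | ∀ z ∈ {z : E → ℝ | ∃ x ∈ K, ∀ i : E, x i = z i},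
        0 ≤ ∑ i : E, c i * z i}) ∧
    ({c : E → ℝ | ∀ z ∈ {z : E → ℝ | ∃ x ∈ K, ∀ i : E, x i = z i},
        0 ≤ ∑ i : E, c i * z i} ⊆
      closure {c : E → ℝ | ∃ cbar : Fin d → ℝ,
        (∀ x ∈ K, 0 ≤ ∑ i, cbar i * x i) ∧
        (∀ i ∉ E, cbar i = 0) ∧ (∀ i : E, cbar i = c i)}) :=
  stmt_2_general d K E
end

section
/- Let Ẑ ∈ ℝ^E with Ẑ ≥ 0 entrywise, where E is a symmetric index set containing the diagonal. Then the optimization problem min ⟨A_E, Ẑ⟩ over matrices C ⪰ 0 and A with A ≥ C entrywise, A_{ij} = 0 for (i,j) ∉ E, and ‖diag(A)‖₁ ≤ 1, has the same optimal value as min ⟨C_E, Ẑ⟩ over C ⪰ 0 with C_{ij} ≤ 0 for all (i,j) ∉ E and ‖diag(C)‖₁ ≤ 1. -/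
/-!
A feasible pair `(A, C)` of the first problem yields the feasible point `C` of the second one
with no larger objective: off `E` we have `C ≤ A = 0`, on the diagonal `0 ≤ C i i ≤ A i i`,
and `Ẑ ≥ 0` makes the objective monotone. Conversely a feasible `C` of the second problem
gives the pair `(C_E, C)`, where `C_E` is `C` with its entries off `E` set to `0`; since
`C ≤ 0` off `E` we have `C ≤ C_E`, and as `E` contains the diagonal, `C_E` has the diagonal
and the objective value of `C`. Two sets of reals each of whose elements dominates an
element of the other have the same infimum.
-/

open Finset

namespace Matrix

variable {ι : Type*} {E : Finset (ι × ι)} {C : Matrix ι ι ℝ}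

theorem sum_abs_diag_le_of_le [Fintype ι] {A : Matrix ι ι ℝ} (hC : C.PosSemidef)
    (hCA : ∀ i j, C i j ≤ A i j) : ∑ i, |C i i| ≤ ∑ i, |A i i| :=
  sum_le_sum fun i _ => by
    rw [abs_of_nonneg hC.diag_nonneg]
    exact (hCA i i).trans (le_abs_self _)

theorem sum_mul_le_sum_mul_of_le {A : Matrix ι ι ℝ} {Z : E → ℝ} (hZ : ∀ p, 0 ≤ Z p)
    (hCA : ∀ i j, C i j ≤ A i j) :
    ∑ p : E, C p.1.1 p.1.2 * Z p ≤ ∑ p : E, A p.1.1 p.1.2 * Z p :=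
  sum_le_sum fun p _ => mul_le_mul_of_nonneg_right (hCA _ _) (hZ p)

section restrictSupport

variable [DecidableEq ι]

def restrictSupport (E : Finset (ι × ι)) (C : Matrix ι ι ℝ) : Matrix ι ι ℝ :=
  of fun i j => if (i, j) ∈ E then C i j else 0

theorem restrictSupport_apply_of_mem {i j : ι} (h : (i, j) ∈ E) :
    restrictSupport E C i j = C i j := if_pos h

theorem restrictSupport_apply_of_notMem {p : ι × ι} (h : p ∉ E) :
    restrictSupport E C p.1 p.2 = 0 := if_neg h

theorem le_restrictSupport (hC : ∀ p : ι × ι, p ∉ E → C p.1 p.2 ≤ 0) (i j : ι) :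
    C i j ≤ restrictSupport E C i j := by
  by_cases h : (i, j) ∈ E
  · exact (restrictSupport_apply_of_mem h).ge
  · exact (hC (i, j) h).trans (restrictSupport_apply_of_notMem (p := (i, j)) h).ge

theorem sum_restrictSupport_mul (Z : E → ℝ) :
    ∑ p : E, restrictSupport E C p.1.1 p.1.2 * Z p = ∑ p : E, C p.1.1 p.1.2 * Z p :=
  sum_congr rfl fun p _ => by rw [restrictSupport_apply_of_mem p.2]

end restrictSupport

end Matrix

open Matrix in
theorem stmt_10_general (n : ℕ) (E : Finset (Fin (n+1) × Fin (n+1)))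
    (hdiag : ∀ i, (i, i) ∈ E)
    (Zhat : E → ℝ) (hZ : ∀ p : E, 0 ≤ Zhat p) :
    sInf {v : ℝ | ∃ A C : Matrix (Fin (n+1)) (Fin (n+1)) ℝ,
        C.PosSemidef ∧ (∀ i j, C i j ≤ A i j) ∧
        (∀ p : Fin (n+1) × Fin (n+1), p ∉ E → A p.1 p.2 = 0) ∧
        (∑ i, |A i i|) ≤ 1 ∧ v = ∑ p : E, A p.1.1 p.1.2 * Zhat p} =
      sInf {v : ℝ | ∃ C : Matrix (Fin (n+1)) (Fin (n+1)) ℝ,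
        C.PosSemidef ∧ (∀ p : Fin (n+1) × Fin (n+1), p ∉ E → C p.1 p.2 ≤ 0) ∧
        (∑ i, |C i i|) ≤ 1 ∧ v = ∑ p : E, C p.1.1 p.1.2 * Zhat p} := by
  apply csInf_eq_csInf_of_forall_exists_le
  · rintro _ ⟨A, C, hC, hCA, hA, hdA, rfl⟩
    refine ⟨_, ⟨C, hC, fun p hp => ?_, (sum_abs_diag_le_of_le hC hCA).trans hdA, rfl⟩,
      sum_mul_le_sum_mul_of_le hZ hCA⟩
    simpa [hA p hp] using hCA p.1 p.2
  · rintro _ ⟨C, hC, hoff, hdC, rfl⟩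
    refine ⟨_, ⟨restrictSupport E C, C, hC, le_restrictSupport hoff,
      fun p hp => restrictSupport_apply_of_notMem hp, ?_, rfl⟩, (sum_restrictSupport_mul _).le⟩
    simpa only [restrictSupport_apply_of_mem (hdiag _)] using hdC

/-- The two formulations of the E-DNN separation problem have the same optimal
value: minimizing `⟨A_E, Ẑ⟩` over `C ⪰ 0`, `A ≥ C` entrywise, `A` supported on
`E`, `‖diag(A)‖₁ ≤ 1` equals minimizing `⟨C_E, Ẑ⟩` over `C ⪰ 0` with
`C_{ij} ≤ 0` off `E` and `‖diag(C)‖₁ ≤ 1`, provided `Ẑ ≥ 0`. -/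
theorem stmt_10 (n : ℕ) (E : Finset (Fin (n+1) × Fin (n+1)))
    (hdiag : ∀ i, (i, i) ∈ E) (hsym : ∀ p ∈ E, (p.2, p.1) ∈ E)
    (Zhat : E → ℝ) (hZ : ∀ p : E, 0 ≤ Zhat p) :
    sInf {v : ℝ | ∃ A C : Matrix (Fin (n+1)) (Fin (n+1)) ℝ,
        C.PosSemidef ∧ (∀ i j, C i j ≤ A i j) ∧
        (∀ p : Fin (n+1) × Fin (n+1), p ∉ E → A p.1 p.2 = 0) ∧
        (∑ i, |A i i|) ≤ 1 ∧ v = ∑ p : E, A p.1.1 p.1.2 * Zhat p} =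
      sInf {v : ℝ | ∃ C : Matrix (Fin (n+1)) (Fin (n+1)) ℝ,
        C.PosSemidef ∧ (∀ p : Fin (n+1) × Fin (n+1), p ∉ E → C p.1 p.2 ≤ 0) ∧
        (∑ i, |C i i|) ≤ 1 ∧ v = ∑ p : E, C p.1.1 p.1.2 * Zhat p} :=
  stmt_10_general n E hdiag Zhat hZ
end

section
/- For any (n+1)×(n+1) positive semidefinite matrix Y and any indices i, j, one has |Y_{ij}| ≤ √(Y_{ii} Y_{jj}) ≤ (Y_{ii} + Y_{jj})/2. Consequently, the set of PSD matrices with trace at most 1 is compact, and hence for any symmetric index set E containing the diagonal, the projection proj_{ℝ^E}(S⁺) of the PSD cone onto the coordinates in E is a closed convex cone. -/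
/-!
The 2 × 2 principal minors of a positive semidefinite matrix are nonnegative, which gives
`Y i j ^ 2 ≤ Y i i * Y j j`; with AM-GM every entry is bounded by the trace, so the PSD matrices
of bounded trace form a closed and bounded, hence compact, set. When `E` contains the diagonal,
the trace is a continuous function of the `E`-coordinates, so the restriction map to `ℝ^E` is
proper on the PSD cone, and the image of a closed set under such a map is closed.
-/

open Matrix Topology

theorem Real.sqrt_mul_le_add_div_two {a b : ℝ} (ha : 0 ≤ a) (hb : 0 ≤ b) :
    √(a * b) ≤ (a + b) / 2 :=
  Real.sqrt_le_iff.2 ⟨by positivity, by nlinarith [sq_nonneg (a - b)]⟩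

namespace Matrix.PosSemidef

variable {ι : Type*} {Y : Matrix ι ι ℝ}

theorem sq_apply_le_mul_diag (hY : Y.PosSemidef) (i j : ι) : Y i j ^ 2 ≤ Y i i * Y j j := by
  have hdet := (hY.submatrix ![i, j]).det_nonneg
  have hsymm : Y j i = Y i j := by simpa using hY.isHermitian.apply i j
  simp only [det_fin_two, submatrix_apply, cons_val_zero, cons_val_one] at hdet
  rw [hsymm, ← sq] at hdet
  linarith

theorem abs_apply_le_sqrt_mul_diag (hY : Y.PosSemidef) (i j : ι) :
    |Y i j| ≤ √(Y i i * Y j j) :=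
  Real.abs_le_sqrt (hY.sq_apply_le_mul_diag i j)

theorem sqrt_mul_diag_le_add_div_two (hY : Y.PosSemidef) (i j : ι) :
    √(Y i i * Y j j) ≤ (Y i i + Y j j) / 2 :=
  Real.sqrt_mul_le_add_div_two hY.diag_nonneg hY.diag_nonneg

theorem apply_le_trace [Fintype ι] (hY : Y.PosSemidef) (i : ι) : Y i i ≤ Y.trace :=
  Finset.single_le_sum (f := fun k => Y k k) (fun _ _ => hY.diag_nonneg) (Finset.mem_univ i)

theorem abs_apply_le_trace [Fintype ι] (hY : Y.PosSemidef) (i j : ι) : |Y i j| ≤ Y.trace := by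
  calc |Y i j| ≤ √(Y i i * Y j j) := hY.abs_apply_le_sqrt_mul_diag i j
    _ ≤ (Y i i + Y j j) / 2 := hY.sqrt_mul_diag_le_add_div_two i j
    _ ≤ Y.trace := by linarith [hY.apply_le_trace i, hY.apply_le_trace j]

end Matrix.PosSemidef

theorem Matrix.isClosed_setOf_posSemidef (ι : Type*) :
    IsClosed {Y : Matrix ι ι ℝ | Y.PosSemidef} := by
  simp only [PosSemidef, IsHermitian, Set.ofPred_and, Set.ofPred_forall]
  refine (isClosed_eq continuous_id.matrix_conjTranspose continuous_id).inter
    (isClosed_iInter fun x => isClosed_le continuous_const ?_)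
  unfold Finsupp.sum
  fun_prop

theorem Matrix.isCompact_setOf_posSemidef_trace_le (ι : Type*) [Fintype ι] (C : ℝ) :
    IsCompact {Y : Matrix ι ι ℝ | Y.PosSemidef ∧ Y.trace ≤ C} := by
  have hbox : IsCompact (Set.univ.pi fun _ : ι => Set.univ.pi fun _ : ι => Set.Icc (-C) C) :=
    isCompact_univ_pi fun _ => isCompact_univ_pi fun _ => isCompact_Icc
  refine hbox.of_isClosed_subset ((isClosed_setOf_posSemidef ι).inter
      (isClosed_le continuous_id.matrix_trace continuous_const))
    fun Y ⟨hY, hC⟩ i _ j _ => abs_le.1 ((hY.abs_apply_le_trace i j).trans hC)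

theorem isClosed_image_of_isCompact_sublevel {α β : Type*} [TopologicalSpace α]
    [TopologicalSpace β] [T2Space β] {S : Set α} {f : α → β} (hf : Continuous f) {g : β → ℝ}
    (hg : Continuous g) (hS : ∀ C, IsCompact (S ∩ {x | g (f x) ≤ C})) : IsClosed (f '' S) := by
  refine isClosed_of_closure_subset fun y hy => ?_
  -- near `y`, the set `f '' S` coincides with the compact set `K`
  set K := f '' (S ∩ {x | g (f x) ≤ g y + 1})
  have hU : {z | g z < g y + 1} ∈ 𝓝 y :=
    (isOpen_lt hg continuous_const).mem_nhds (lt_add_one (g y))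
  have hyK : y ∈ closure K := mem_closure_iff_nhds.2 fun t ht => by
    obtain ⟨_, ⟨ht, hlt⟩, x, hxS, rfl⟩ :=
      mem_closure_iff_nhds.1 hy _ (Filter.inter_mem ht hU)
    exact ⟨f x, ht, x, ⟨hxS, (show g (f x) < g y + 1 from hlt).le⟩, rfl⟩
  exact Set.image_mono Set.inter_subset_left (((hS _).image hf).isClosed.closure_subset hyK)

theorem Matrix.isClosed_image_restrict_posSemidef {ι : Type*} [Fintype ι] (E : Finset (ι × ι))
    (hE : ∀ i, (i, i) ∈ E) :
    IsClosed ((fun (Y : Matrix ι ι ℝ) (p : E) => Y p.1.1 p.1.2) '' {Y | Y.PosSemidef}) :=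
  isClosed_image_of_isCompact_sublevel (by fun_prop)
    (g := fun Z => ∑ i, Z ⟨(i, i), hE i⟩) (by fun_prop)
    (isCompact_setOf_posSemidef_trace_le ι)

/-- For any PSD matrix `Y`, `|Y_{ij}| ≤ √(Y_{ii} Y_{jj}) ≤ (Y_{ii} + Y_{jj})/2`;
consequently the set of PSD matrices with trace at most 1 is compact, and for
any symmetric index set `E` containing the diagonal, the projection of the PSD
cone onto the coordinates in `E` is closed. -/
theorem stmt_13 (n : ℕ) :
    (∀ Y : Matrix (Fin (n+1)) (Fin (n+1)) ℝ, Y.PosSemidef → ∀ i j,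
      |Y i j| ≤ Real.sqrt (Y i i * Y j j) ∧
      Real.sqrt (Y i i * Y j j) ≤ (Y i i + Y j j) / 2) ∧
    IsCompact {Y : Matrix (Fin (n+1)) (Fin (n+1)) ℝ | Y.PosSemidef ∧ Y.trace ≤ 1} ∧
    (∀ E : Finset (Fin (n+1) × Fin (n+1)),
      (∀ i, (i, i) ∈ E) → (∀ p ∈ E, (p.2, p.1) ∈ E) →
      IsClosed {Z : E → ℝ | ∃ Y : Matrix (Fin (n+1)) (Fin (n+1)) ℝ,
        Y.PosSemidef ∧ ∀ p : E, Z p = Y p.1.1 p.1.2}) := by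
  refine ⟨fun Y hY i j =>
      ⟨hY.abs_apply_le_sqrt_mul_diag i j, hY.sqrt_mul_diag_le_add_div_two i j⟩,
    isCompact_setOf_posSemidef_trace_le _ 1, fun E hE _ => ?_⟩
  convert isClosed_image_restrict_posSemidef E hE using 1
  ext Z
  simp only [Set.mem_image, Set.mem_ofPred_eq, funext_iff, eq_comm]
end

section
/- Let E be a symmetric set of index pairs of an (n+1)×(n+1) symmetric matrix containing all diagonal pairs. Let Q⁰,…,Qᵐ be symmetric matrices each supported on E (Q^k_{ij} = 0 for (i,j) ∉ E), and let 𝒴 be a set of symmetric matrices defined by linear conditions involving only entries in E. Define z^SDP = inf{⟨Q⁰, Y⟩ : Y ∈ 𝒴, ⟨Q^k, Y⟩ ≤ 0 for k=1,…,m, Y ⪰ 0} and z^{SDP-E} = inf{⟨Q⁰, Y⟩ : Y ∈ 𝒴, ⟨Q^k, Y⟩ ≤ 0 for k=1,…,m, ⟨C, Y⟩ ≥ 0 for all PSD C supported on E}. Then z^SDP = z^{SDP-E}. -/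
/-!
Write `⟪C, Y⟫ = trace (Cᵀ Y)` and let `π_E Y` keep the entries of `Y` in `E` and zero the rest.
Since the data only read entries in `E`, a relaxed-feasible `Y` is as good as any `X ⪰ 0` with
`π_E X = π_E Y`, so everything reduces to the fact that `π_E Y` lies in the cone `π_E(S⁺)` as soon as
`⟪C, Y⟫ ≥ 0` for all PSD `C` supported on `E`. The cone `π_E(S⁺)` is closed because `E` contains
the diagonal, so the trace of `π_E X` controls every entry of `X ⪰ 0`. If `π_E Y` were outside it,
Farkas' lemma would give a functional `⟪C, ·⟫` that is nonnegative on `π_E(S⁺)` and negative at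
`π_E Y`; the symmetric part of `π_E C` is then a PSD matrix supported on `E` (as `E` is symmetric)
that violates the cut at `Y`.
-/

open Matrix

namespace Matrix

instance {m n : Type*} : LocallyConvexSpace ℝ (Matrix m n ℝ) :=
  inferInstanceAs (LocallyConvexSpace ℝ (m → n → ℝ))

section TracePairing

variable {m n R : Type*} [Fintype m] [Fintype n] [CommSemiring R]

theorem trace_transpose_mul_eq_sum (A B : Matrix m n R) :
    (Aᵀ * B).trace = ∑ i, ∑ j, A i j * B i j := by
  rw [trace_mul_comm, ← sum_hadamard_eq]
  simp only [hadamard_apply, mul_comm]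

theorem trace_transpose_mul_hadamard (M C Z : Matrix m n R) :
    ((M ⊙ C)ᵀ * Z).trace = (Cᵀ * (M ⊙ Z)).trace := by
  simp only [trace_transpose_mul_eq_sum, hadamard_apply]
  exact Fintype.sum_congr _ _ fun i => Fintype.sum_congr _ _ fun j => by ring

theorem exists_trace_transpose_mul_eq [DecidableEq m] [DecidableEq n]
    (f : Matrix m n R →ₗ[R] R) : ∃ C : Matrix m n R, ∀ X, f X = (Cᵀ * X).trace := by
  refine ⟨of fun i j => f (single i j 1), fun X => ?_⟩
  have hX : X = ∑ i, ∑ j, X i j • single i j (1 : R) := by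
    simpa [smul_single] using matrix_eq_sum_single X
  conv_lhs => rw [hX]
  simp only [map_sum, map_smul, smul_eq_mul, trace_transpose_mul_eq_sum, of_apply, mul_comm]

end TracePairing

variable {ι : Type*}

section Pattern

variable [DecidableEq ι] (E : Finset (ι × ι))

def pattern : Matrix ι ι ℝ := of fun i j => if (i, j) ∈ E then 1 else 0

variable {E}

@[simp]
theorem pattern_apply (i j : ι) : pattern E i j = if (i, j) ∈ E then 1 else 0 := rfl

theorem pattern_hadamard_eq_self {C : Matrix ι ι ℝ} (hC : ∀ p ∉ E, C p.1 p.2 = 0) :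
    pattern E ⊙ C = C := by
  ext i j
  by_cases h : (i, j) ∈ E <;> simp [hadamard_apply, h, hC (i, j)]

theorem pattern_hadamard_eq_pattern_hadamard_iff {X Y : Matrix ι ι ℝ} :
    pattern E ⊙ X = pattern E ⊙ Y ↔ ∀ p ∈ E, X p.1 p.2 = Y p.1 p.2 := by
  refine ⟨fun h p hp => by simpa [hadamard_apply, hp] using congrFun₂ h p.1 p.2, fun h => ?_⟩
  ext i j
  by_cases hij : (i, j) ∈ E <;> simp [hadamard_apply, hij, h (i, j)]

end Pattern

variable [Fintype ι]

theorem trace_mul_eq_trace_transpose_mul_of_isSymm {Z : Matrix ι ι ℝ} (hZ : Z.IsSymm)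
    (C : Matrix ι ι ℝ) : (C * Z).trace = (Cᵀ * Z).trace := by
  rw [← trace_transpose (Cᵀ * Z), transpose_mul, transpose_transpose, hZ.eq, trace_mul_comm]

theorem trace_transpose_symmPart_mul {Z : Matrix ι ι ℝ} (hZ : Z.IsSymm) (C : Matrix ι ι ℝ) :
    (((2 : ℝ)⁻¹ • (C + Cᵀ))ᵀ * Z).trace = (Cᵀ * Z).trace := by
  rw [transpose_smul, transpose_add, transpose_transpose, smul_mul, add_mul, trace_smul, trace_add,
    trace_mul_eq_trace_transpose_mul_of_isSymm hZ C, smul_eq_mul]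
  ring

theorem PosSemidef.trace_transpose_mul_nonneg {C Y : Matrix ι ι ℝ} (hC : C.PosSemidef)
    (hY : Y.PosSemidef) : 0 ≤ (Cᵀ * Y).trace := by
  -- `⟪C, Y⟫ = 𝟙ᵀ (C ⊙ Y) 𝟙`, and `C ⊙ Y ⪰ 0` by the Schur product theorem.
  simpa [trace_transpose_mul_eq_sum, dotProduct, mulVec] using
    (hC.hadamard hY).dotProduct_mulVec_nonneg fun _ => 1

theorem posSemidef_of_forall_trace_transpose_mul_nonneg {C : Matrix ι ι ℝ} (hC : C.IsSymm)
    (h : ∀ X : Matrix ι ι ℝ, X.PosSemidef → 0 ≤ (Cᵀ * X).trace) : C.PosSemidef := by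
  refine .of_dotProduct_mulVec_nonneg (isHermitian_iff_isSymm.2 hC) fun v => ?_
  simpa [trace_transpose_mul_eq_sum, vecMulVec_apply, dotProduct, mulVec, Finset.mul_sum,
    mul_assoc, mul_left_comm] using h _ (posSemidef_vecMulVec_self_star v)

theorem posSemidef_symmPart_of_forall_trace_transpose_mul_nonneg {C : Matrix ι ι ℝ}
    (h : ∀ X : Matrix ι ι ℝ, X.PosSemidef → 0 ≤ (Cᵀ * X).trace) :
    ((2 : ℝ)⁻¹ • (C + Cᵀ)).PosSemidef := by
  refine posSemidef_of_forall_trace_transpose_mul_nonneg ?_ fun X hX => ?_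
  · rw [IsSymm, transpose_smul, transpose_add, transpose_transpose, add_comm]
  · rw [trace_transpose_symmPart_mul (isHermitian_iff_isSymm.1 hX.isHermitian)]
    exact h X hX

theorem isClosed_setOf_posSemidef_s15 : IsClosed {A : Matrix ι ι ℝ | A.PosSemidef} := by
  simp_rw [posSemidef_iff_dotProduct_mulVec, Set.ofPred_and, Set.ofPred_forall]
  exact (isClosed_eq continuous_id.matrix_conjTranspose continuous_id).inter <|
    isClosed_iInter fun x => isClosed_le continuous_const <|
      continuous_const.dotProduct (continuous_id.matrix_mulVec continuous_const)

theorem PosSemidef.abs_apply_le_trace_s15 {A : Matrix ι ι ℝ} (hA : A.PosSemidef) (i j : ι) :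
    |A i j| ≤ A.trace := by
  classical
  obtain rfl | hij := eq_or_ne i j
  · rw [abs_of_nonneg hA.diag_nonneg]
    exact Finset.single_le_sum (f := A.diag) (fun k _ => hA.diag_nonneg) (Finset.mem_univ i)
  have hdiag : A i i + A j j ≤ A.trace :=
    Finset.add_le_sum (f := A.diag) (fun k _ => hA.diag_nonneg) (Finset.mem_univ i)
      (Finset.mem_univ j) hij
  have hsymm : A j i = A i j := by simpa using congrFun₂ hA.isHermitian i j
  have hplus := hA.dotProduct_mulVec_nonneg (Pi.single i 1 + Pi.single j 1)
  have hminus := hA.dotProduct_mulVec_nonneg (Pi.single i 1 - Pi.single j 1)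
  simp only [star_trivial, mulVec_add, mulVec_sub, dotProduct_add, dotProduct_sub, add_dotProduct,
    sub_dotProduct, mulVec_single, single_dotProduct, Pi.smul_apply, op_smul_eq_mul, col_apply,
    one_mul] at hplus hminus
  rw [abs_le]
  constructor <;> linarith

theorem isCompact_setOf_posSemidef_trace_le_s15 (r : ℝ) :
    IsCompact {A : Matrix ι ι ℝ | A.PosSemidef ∧ A.trace ≤ r} := by
  refine (isCompact_univ_pi fun _ => isCompact_univ_pi fun _ => isCompact_Icc (a := -r) (b := r))
    |>.of_isClosed_subset
      (isClosed_setOf_posSemidef_s15.inter (isClosed_le continuous_id.matrix_trace continuous_const))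
      fun A ⟨hA, hr⟩ => Set.mem_univ_pi.2 fun i => Set.mem_univ_pi.2 fun j =>
        abs_le.1 ((hA.abs_apply_le_trace_s15 i j).trans hr)

variable [DecidableEq ι] {E : Finset (ι × ι)}

theorem trace_pattern_hadamard (hdiag : ∀ i, (i, i) ∈ E) (X : Matrix ι ι ℝ) :
    (pattern E ⊙ X).trace = X.trace := by
  simp [trace, hadamard_apply, hdiag]

theorem trace_transpose_mul_eq_of_eqOn {A X Y : Matrix ι ι ℝ} (hA : ∀ p ∉ E, A p.1 p.2 = 0)
    (hXY : ∀ p ∈ E, X p.1 p.2 = Y p.1 p.2) : (Aᵀ * X).trace = (Aᵀ * Y).trace := by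
  rw [← pattern_hadamard_eq_self hA, trace_transpose_mul_hadamard, trace_transpose_mul_hadamard,
    pattern_hadamard_eq_pattern_hadamard_iff.2 hXY]

theorem isClosed_image_pattern_hadamard (hdiag : ∀ i, (i, i) ∈ E) :
    IsClosed ((pattern E ⊙ ·) '' {A : Matrix ι ι ℝ | A.PosSemidef}) := by
  refine closure_subset_iff_isClosed.1 fun Y hY => ?_
  -- Near `Y` the trace is bounded, and PSD matrices of bounded trace form a compact set.
  set K := (pattern E ⊙ ·) '' {A : Matrix ι ι ℝ | A.PosSemidef}
  set U : Set (Matrix ι ι ℝ) := {Z | Z.trace < Y.trace + 1}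
  have hU : IsOpen U := isOpen_lt continuous_id.matrix_trace continuous_const
  have hUK : U ∩ K ⊆ (pattern E ⊙ ·) '' {A | A.PosSemidef ∧ A.trace ≤ Y.trace + 1} := by
    rintro _ ⟨hZ, A, hA, rfl⟩
    exact ⟨A, ⟨hA, trace_pattern_hadamard hdiag A ▸ hZ.le⟩, rfl⟩
  have hclosed : IsClosed ((pattern E ⊙ ·) '' {A | A.PosSemidef ∧ A.trace ≤ Y.trace + 1}) :=
    ((isCompact_setOf_posSemidef_trace_le_s15 _).image (continuous_pi fun i => continuous_pi fun j =>
      continuous_const.mul (continuous_id.matrix_elem i j))).isClosed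
  obtain ⟨A, ⟨hA, -⟩, hAY⟩ := hclosed.closure_subset_iff.2 hUK
    (hU.inter_closure ⟨by simp [U], hY⟩)
  exact ⟨A, hA, hAY⟩

def psdCompletableCone (E : Finset (ι × ι)) (hdiag : ∀ i, (i, i) ∈ E) :
    ProperCone ℝ (Matrix ι ι ℝ) where
  carrier := (pattern E ⊙ ·) '' {A | A.PosSemidef}
  add_mem' := by
    rintro _ _ ⟨A, hA, rfl⟩ ⟨B, hB, rfl⟩
    exact ⟨A + B, hA.add hB, hadamard_add _ _ _⟩
  zero_mem' := ⟨0, .zero, hadamard_zero _⟩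
  smul_mem' := by
    rintro c _ ⟨A, hA, rfl⟩
    exact ⟨c • A, hA.smul c.2, hadamard_smul _ _ _⟩
  isClosed' := isClosed_image_pattern_hadamard hdiag

theorem exists_posSemidef_eqOn_of_forall_pattern_cut (hdiag : ∀ i, (i, i) ∈ E)
    (hsymm : ∀ p ∈ E, (p.2, p.1) ∈ E) {Y : Matrix ι ι ℝ} (hY : Y.IsSymm)
    (hcuts : ∀ C : Matrix ι ι ℝ, C.PosSemidef → (∀ p ∉ E, C p.1 p.2 = 0) →
      0 ≤ (Cᵀ * Y).trace) :
    ∃ X : Matrix ι ι ℝ, X.PosSemidef ∧ ∀ p ∈ E, X p.1 p.2 = Y p.1 p.2 := by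
  by_contra hne
  have hYK : pattern E ⊙ Y ∉ psdCompletableCone E hdiag := by
    rintro ⟨X, hX, hXY⟩
    exact hne ⟨X, hX, pattern_hadamard_eq_pattern_hadamard_iff.1 hXY⟩
  obtain ⟨f, hf, hfY⟩ := (psdCompletableCone E hdiag).hyperplane_separation_point hYK
  obtain ⟨C, hC⟩ := exists_trace_transpose_mul_eq (f : Matrix ι ι ℝ →ₗ[ℝ] ℝ)
  set D := (2 : ℝ)⁻¹ • (pattern E ⊙ C + (pattern E ⊙ C)ᵀ)
  have hD : ∀ Z : Matrix ι ι ℝ, Z.IsSymm → (Dᵀ * Z).trace = f (pattern E ⊙ Z) := fun Z hZ => by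
    rw [trace_transpose_symmPart_mul hZ, trace_transpose_mul_hadamard]
    exact (hC _).symm
  have hDsupp : ∀ p ∉ E, D p.1 p.2 = 0 := fun p hp => by
    have hp' : (p.2, p.1) ∉ E := fun h => hp (hsymm _ h)
    simp [D, hadamard_apply, hp, hp']
  have hDpsd : D.PosSemidef := posSemidef_symmPart_of_forall_trace_transpose_mul_nonneg
    fun X hX => by
      rw [trace_transpose_mul_hadamard, ← hC]
      exact hf _ ⟨X, hX, rfl⟩
  exact (hcuts D hDpsd hDsupp).not_gt (hD Y hY ▸ hfY)

end Matrix

theorem stmt_15_general (n m : ℕ) (E : Finset (Fin (n+1) × Fin (n+1)))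
    (hdiag : ∀ i, (i, i) ∈ E) (hsymE : ∀ p ∈ E, (p.2, p.1) ∈ E)
    (Q0 : Matrix (Fin (n+1)) (Fin (n+1)) ℝ)
    (Q : Fin m → Matrix (Fin (n+1)) (Fin (n+1)) ℝ)
    (hQ0supp : ∀ p : Fin (n+1) × Fin (n+1), p ∉ E → Q0 p.1 p.2 = 0)
    (hQsupp : ∀ k, ∀ p : Fin (n+1) × Fin (n+1), p ∉ E → Q k p.1 p.2 = 0)
    (𝒴 : Set (Matrix (Fin (n+1)) (Fin (n+1)) ℝ))
    (h𝒴sym : ∀ Y ∈ 𝒴, Y.IsSymm)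
    (h𝒴E : ∀ Y Y' : Matrix (Fin (n+1)) (Fin (n+1)) ℝ, Y ∈ 𝒴 → Y'.IsSymm →
      (∀ p : Fin (n+1) × Fin (n+1), p ∈ E → Y' p.1 p.2 = Y p.1 p.2) → Y' ∈ 𝒴) :
    sInf {v : ℝ | ∃ Y ∈ 𝒴, (∀ k, ((Q k)ᵀ * Y).trace ≤ 0) ∧
        Y.PosSemidef ∧ v = (Q0ᵀ * Y).trace} =
      sInf {v : ℝ | ∃ Y ∈ 𝒴, (∀ k, ((Q k)ᵀ * Y).trace ≤ 0) ∧
        (∀ C : Matrix (Fin (n+1)) (Fin (n+1)) ℝ, C.PosSemidef →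
          (∀ p : Fin (n+1) × Fin (n+1), p ∉ E → C p.1 p.2 = 0) →
          0 ≤ (Cᵀ * Y).trace) ∧
        v = (Q0ᵀ * Y).trace} := by
  congr 1
  ext v
  constructor
  · rintro ⟨Y, hY, hQY, hpsd, rfl⟩
    exact ⟨Y, hY, hQY, fun C hC _ => hC.trace_transpose_mul_nonneg hpsd, rfl⟩
  · rintro ⟨Y, hY, hQY, hcuts, rfl⟩
    obtain ⟨X, hX, hXY⟩ :=
      exists_posSemidef_eqOn_of_forall_pattern_cut hdiag hsymE (h𝒴sym Y hY) hcuts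
    refine ⟨X, h𝒴E Y X hY (isHermitian_iff_isSymm.1 hX.isHermitian) hXY, fun k => ?_, hX, ?_⟩
    · exact trace_transpose_mul_eq_of_eqOn (hQsupp k) hXY ▸ hQY k
    · exact (trace_transpose_mul_eq_of_eqOn hQ0supp hXY).symm

/-- `z^SDP = z^{SDP-E}`: the SDP relaxation with data supported on a symmetric
index set `E` (containing the diagonal), over a feasible set `𝒴` of symmetric
matrices whose membership depends only on the entries in `E`, has the same
optimal value whether one imposes `Y ⪰ 0` or only the E-PSD cuts
`⟨C, Y⟩ ≥ 0` for all PSD `C` supported on `E`. -/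
theorem stmt_15 (n m : ℕ) (E : Finset (Fin (n+1) × Fin (n+1)))
    (hdiag : ∀ i, (i, i) ∈ E) (hsymE : ∀ p ∈ E, (p.2, p.1) ∈ E)
    (Q0 : Matrix (Fin (n+1)) (Fin (n+1)) ℝ)
    (Q : Fin m → Matrix (Fin (n+1)) (Fin (n+1)) ℝ)
    (hQ0sym : Q0.IsSymm) (hQsym : ∀ k, (Q k).IsSymm)
    (hQ0supp : ∀ p : Fin (n+1) × Fin (n+1), p ∉ E → Q0 p.1 p.2 = 0)
    (hQsupp : ∀ k, ∀ p : Fin (n+1) × Fin (n+1), p ∉ E → Q k p.1 p.2 = 0)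
    (𝒴 : Set (Matrix (Fin (n+1)) (Fin (n+1)) ℝ))
    (h𝒴sym : ∀ Y ∈ 𝒴, Y.IsSymm)
    (h𝒴E : ∀ Y Y' : Matrix (Fin (n+1)) (Fin (n+1)) ℝ, Y ∈ 𝒴 → Y'.IsSymm →
      (∀ p : Fin (n+1) × Fin (n+1), p ∈ E → Y' p.1 p.2 = Y p.1 p.2) → Y' ∈ 𝒴) :
    sInf {v : ℝ | ∃ Y ∈ 𝒴, (∀ k, ((Q k)ᵀ * Y).trace ≤ 0) ∧
        Y.PosSemidef ∧ v = (Q0ᵀ * Y).trace} =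
      sInf {v : ℝ | ∃ Y ∈ 𝒴, (∀ k, ((Q k)ᵀ * Y).trace ≤ 0) ∧
        (∀ C : Matrix (Fin (n+1)) (Fin (n+1)) ℝ, C.PosSemidef →
          (∀ p : Fin (n+1) × Fin (n+1), p ∉ E → C p.1 p.2 = 0) →
          0 ≤ (Cᵀ * Y).trace) ∧
        v = (Q0ᵀ * Y).trace} :=
  stmt_15_general n m E hdiag hsymE Q0 Q hQ0supp hQsupp 𝒴 h𝒴sym h𝒴E
end
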